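/- Let d ≥ 5 and let i be an integer with 0 ≤ i ≤ d−5. Then both quadratic binomials x_i x_{i+5} − x_{i+2} x_{i+3} and x_{i+2} x_{i+5} − x_{i+3} x_{i+4} lie in the K-linear span of the homogeneous quadratic polynomials of rank at most 3 contained in the degree-2 component (I_{d,i+1})₂. -/
import Mathlib


open MvPolynomial

/-- A polynomial `q` has rank at most `k` as a quadric: it is a sum of `k` squares of
linear forms. -/
def rankLE {K : Type*} [CommSemiring K] {σ : Type*} (k : ℕ) (q : MvPolynomial σ K) : Prop :=
  ∃ ℓ : Fin k → MvPolynomial σ K, (∀ i, (ℓ i).IsHomogeneous 1) ∧ q = ∑ i, (ℓ i) ^ 2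

/-- The homogeneous ideal `I_{d,c}` of the monomial projection `π_{e_c}(C_d)`: the kernel of
the map `K[x_i : 0 ≤ i ≤ d, i ≠ c] → K[s,t]`, `x_i ↦ s^{d-i} t^i`. -/
noncomputable def projIdeal (K : Type*) [Field K] (d c : ℕ) :
    Ideal (MvPolynomial {i : Fin (d + 1) // (i : ℕ) ≠ c} K) :=
  RingHom.ker (aeval (fun i : {i : Fin (d + 1) // (i : ℕ) ≠ c} =>
      X 0 ^ (d - (i.1 : ℕ)) * X 1 ^ (i.1 : ℕ)) :
    MvPolynomial {i : Fin (d + 1) // (i : ℕ) ≠ c} K →ₐ[K] MvPolynomial (Fin 2) K)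

/-- The variable `x_m` of the ring `K[x_i : 0 ≤ i ≤ d, i ≠ c]`. -/
noncomputable def xVar (K : Type*) [Field K] (d c m : ℕ) (h1 : m < d + 1) (h2 : m ≠ c) :
    MvPolynomial {i : Fin (d + 1) // (i : ℕ) ≠ c} K :=
  X ⟨⟨m, h1⟩, h2⟩

theorem stmt7 {K : Type*} [Field K] [IsAlgClosed K] [CharZero K]
    (d i : ℕ) (hd : 5 ≤ d) (hi : i ≤ d - 5) :
    (xVar K d (i + 1) i (by omega) (by omega) * xVar K d (i + 1) (i + 5) (by omega) (by omega)
        - xVar K d (i + 1) (i + 2) (by omega) (by omega)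
            * xVar K d (i + 1) (i + 3) (by omega) (by omega)
      ∈ Submodule.span K {q : MvPolynomial {m : Fin (d + 1) // (m : ℕ) ≠ i + 1} K |
          q ∈ projIdeal K d (i + 1) ∧ q.IsHomogeneous 2 ∧ rankLE 3 q})
    ∧ (xVar K d (i + 1) (i + 2) (by omega) (by omega)
          * xVar K d (i + 1) (i + 5) (by omega) (by omega)
        - xVar K d (i + 1) (i + 3) (by omega) (by omega)
            * xVar K d (i + 1) (i + 4) (by omega) (by omega)
      ∈ Submodule.span K {q : MvPolynomial {m : Fin (d + 1) // (m : ℕ) ≠ i + 1} K |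
          q ∈ projIdeal K d (i + 1) ∧ q.IsHomogeneous 2 ∧ rankLE 3 q}) := by
  have h5 : i + 5 ≤ d := by omega
  obtain ⟨j, hj⟩ := IsAlgClosed.exists_pow_nat_eq (-1 : K) (n := 2) (by norm_num)
  -- membership of the basic binomials in the ideal
  have hB : ∀ (a b c e : ℕ) (ha : a < d + 1) (ha' : a ≠ i + 1) (hb : b < d + 1)
      (hb' : b ≠ i + 1) (hc : c < d + 1) (hc' : c ≠ i + 1) (he : e < d + 1) (he' : e ≠ i + 1),
      a + b = c + e →
      xVar K d (i+1) a ha ha' * xVar K d (i+1) b hb hb'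
        - xVar K d (i+1) c hc hc' * xVar K d (i+1) e he he' ∈ projIdeal K d (i+1) := by
    intro a b c e ha ha' hb hb' hc hc' he he' habce
    unfold projIdeal
    rw [RingHom.mem_ker]
    simp only [xVar, map_sub, map_mul, aeval_X]
    have key : ∀ u v : ℕ, (X 0 : MvPolynomial (Fin 2) K) ^ (d - u) * X 1 ^ u
        * (X 0 ^ (d - v) * X 1 ^ v)
        = X 0 ^ ((d - u) + (d - v)) * X 1 ^ (u + v) := by
      intro u v; rw [pow_add, pow_add]; ring
    rw [key, key, habce, show (d - a) + (d - b) = (d - c) + (d - e) by omega, sub_self]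
  have main : ∀ x0 x2 x3 x4 x5 : MvPolynomial {m : Fin (d + 1) // (m : ℕ) ≠ i + 1} K,
      x0.IsHomogeneous 1 → x2.IsHomogeneous 1 → x3.IsHomogeneous 1 → x4.IsHomogeneous 1 →
      x5.IsHomogeneous 1 →
      x0 * x4 - x2 * x2 ∈ projIdeal K d (i+1) →
      x2 * x4 - x3 * x3 ∈ projIdeal K d (i+1) →
      x0 * x5 - x2 * x3 ∈ projIdeal K d (i+1) →
      x2 * x5 - x3 * x4 ∈ projIdeal K d (i+1) →
      x3 * x5 - x4 * x4 ∈ projIdeal K d (i+1) →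
      (x0 * x5 - x2 * x3
          ∈ Submodule.span K {q : MvPolynomial {m : Fin (d + 1) // (m : ℕ) ≠ i + 1} K |
            q ∈ projIdeal K d (i + 1) ∧ q.IsHomogeneous 2 ∧ rankLE 3 q}
        ∧ x2 * x5 - x3 * x4
          ∈ Submodule.span K {q : MvPolynomial {m : Fin (d + 1) // (m : ℕ) ≠ i + 1} K |
            q ∈ projIdeal K d (i + 1) ∧ q.IsHomogeneous 2 ∧ rankLE 3 q}) := by
    intro x0 x2 x3 x4 x5 h0 h2 h3 h4 h5' k1 k2 k3 k4 k5
    have hj' : (C j : MvPolynomial {m : Fin (d + 1) // (m : ℕ) ≠ i + 1} K) ^ 2 = -1 := by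
      rw [← map_pow, hj, map_neg, map_one]
    have hj2 : (C (2 * j) : MvPolynomial {m : Fin (d + 1) // (m : ℕ) ≠ i + 1} K) ^ 2 = -4 := by
      rw [← map_pow, show (2 * j) ^ 2 = (-4 : K) by linear_combination (4 : K) * hj,
        map_neg, map_ofNat]
    -- generic rank-3 generator
    have hgen : ∀ A B Cc : MvPolynomial {m : Fin (d + 1) // (m : ℕ) ≠ i + 1} K,
        A.IsHomogeneous 1 → B.IsHomogeneous 1 → Cc.IsHomogeneous 1 →
        (C (4:K) * (A * B - Cc * Cc)) ∈ projIdeal K d (i+1) →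
        C (4:K) * (A * B - Cc * Cc)
          ∈ Submodule.span K {q : MvPolynomial {m : Fin (d + 1) // (m : ℕ) ≠ i + 1} K |
            q ∈ projIdeal K d (i + 1) ∧ q.IsHomogeneous 2 ∧ rankLE 3 q} := by
      intro A B Cc hA hB' hCc hker
      refine Submodule.subset_span ⟨hker, ?_, ?_⟩
      · have h2' : (A * B - Cc * Cc).IsHomogeneous 2 := by
          simpa using (hA.mul hB').sub (hCc.mul hCc)
        exact h2'.C_mul _
      · refine ⟨![A + B, C j * (A - B), C (2 * j) * Cc], ?_, ?_⟩
        · intro t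
          fin_cases t
          · simpa using hA.add hB'
          · simpa using (hA.sub hB').C_mul j
          · simpa using hCc.C_mul (2 * j)
        · rw [Fin.sum_univ_three]
          simp only [Matrix.cons_val_zero, Matrix.cons_val_one, Matrix.head_cons,
            Matrix.cons_val_two, Matrix.tail_cons, map_ofNat]
          linear_combination (-(A - B) ^ 2) * hj' + (-(Cc * Cc)) * hj2
    -- the five generators
    have sG1 := hgen x0 x4 x2 h0 h4 h2 (by
      have e : C (4:K) * (x0 * x4 - x2 * x2)
          = (4 : MvPolynomial {m : Fin (d + 1) // (m : ℕ) ≠ i + 1} K) * (x0 * x4 - x2 * x2) := by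
        rw [map_ofNat]
      rw [e]; exact Ideal.mul_mem_left _ _ k1)
    have sG2 := hgen x2 x4 x3 h2 h4 h3 (by
      have e : C (4:K) * (x2 * x4 - x3 * x3)
          = (4 : MvPolynomial {m : Fin (d + 1) // (m : ℕ) ≠ i + 1} K) * (x2 * x4 - x3 * x3) := by
        rw [map_ofNat]
      rw [e]; exact Ideal.mul_mem_left _ _ k2)
    have sG5 := hgen x3 x5 x4 h3 h5' h4 (by
      have e : C (4:K) * (x3 * x5 - x4 * x4)
          = (4 : MvPolynomial {m : Fin (d + 1) // (m : ℕ) ≠ i + 1} K) * (x3 * x5 - x4 * x4) := by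
        rw [map_ofNat]
      rw [e]; exact Ideal.mul_mem_left _ _ k5)
    have sGA := hgen (x0 - C 3 * x2 + C 2 * x3)
      (x0 - x2 + C 4 * x3 - C 3 * x4 + C 2 * x5)
      (x0 - C 2 * x2 + C 3 * x3 - C 2 * x4)
      ((h0.sub (h2.C_mul 3)).add (h3.C_mul 2))
      ((((h0.sub h2).add (h3.C_mul 4)).sub (h4.C_mul 3)).add (h5'.C_mul 2))
      (((h0.sub (h2.C_mul 2)).add (h3.C_mul 3)).sub (h4.C_mul 2))
      (by
        have e : C (4:K) * ((x0 - C 3 * x2 + C 2 * x3)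
              * (x0 - x2 + C 4 * x3 - C 3 * x4 + C 2 * x5)
            - (x0 - C 2 * x2 + C 3 * x3 - C 2 * x4) * (x0 - C 2 * x2 + C 3 * x3 - C 2 * x4))
            = 4 * (x0 * x4 - x2 * x2) + 4 * (x2 * x4 - x3 * x3) + 8 * (x0 * x5 - x2 * x3)
              - 24 * (x2 * x5 - x3 * x4) + 16 * (x3 * x5 - x4 * x4) := by
          simp only [map_ofNat]; ring
        rw [e]
        exact add_mem (sub_mem (add_mem (add_mem (Ideal.mul_mem_left _ _ k1)
          (Ideal.mul_mem_left _ _ k2)) (Ideal.mul_mem_left _ _ k3))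
          (Ideal.mul_mem_left _ _ k4)) (Ideal.mul_mem_left _ _ k5))
    have sGB := hgen (C 4 * x0 - C 3 * x2 + x3)
      (C 4 * x0 + C 5 * x2 + C 5 * x3 + C 4 * x5)
      (C 4 * x0 + x2 + C 3 * x3 - C 2 * x4)
      (((h0.C_mul 4).sub (h2.C_mul 3)).add h3)
      ((((h0.C_mul 4).add (h2.C_mul 5)).add (h3.C_mul 5)).add (h5'.C_mul 4))
      ((((h0.C_mul 4).add h2).add (h3.C_mul 3)).sub (h4.C_mul 2))
      (by
        have e : C (4:K) * ((C 4 * x0 - C 3 * x2 + x3)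
              * (C 4 * x0 + C 5 * x2 + C 5 * x3 + C 4 * x5)
            - (C 4 * x0 + x2 + C 3 * x3 - C 2 * x4) * (C 4 * x0 + x2 + C 3 * x3 - C 2 * x4))
            = 64 * (x0 * x4 - x2 * x2) + 16 * (x2 * x4 - x3 * x3) + 64 * (x0 * x5 - x2 * x3)
              - 48 * (x2 * x5 - x3 * x4) + 16 * (x3 * x5 - x4 * x4) := by
          simp only [map_ofNat]; ring
        rw [e]
        exact add_mem (sub_mem (add_mem (add_mem (Ideal.mul_mem_left _ _ k1)
          (Ideal.mul_mem_left _ _ k2)) (Ideal.mul_mem_left _ _ k3))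
          (Ideal.mul_mem_left _ _ k4)) (Ideal.mul_mem_left _ _ k5))
    constructor
    · have key : (144:K) • (x0 * x5 - x2 * x3)
          = (-6:K) • (C (4:K) * ((x0 - C 3 * x2 + C 2 * x3)
                * (x0 - x2 + C 4 * x3 - C 3 * x4 + C 2 * x5)
              - (x0 - C 2 * x2 + C 3 * x3 - C 2 * x4) * (x0 - C 2 * x2 + C 3 * x3 - C 2 * x4)))
            + (3:K) • (C (4:K) * ((C 4 * x0 - C 3 * x2 + x3)
                * (C 4 * x0 + C 5 * x2 + C 5 * x3 + C 4 * x5)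
              - (C 4 * x0 + x2 + C 3 * x3 - C 2 * x4) * (C 4 * x0 + x2 + C 3 * x3 - C 2 * x4)))
            + (-42:K) • (C (4:K) * (x0 * x4 - x2 * x2))
            + (-6:K) • (C (4:K) * (x2 * x4 - x3 * x3))
            + (12:K) • (C (4:K) * (x3 * x5 - x4 * x4)) := by
        simp only [smul_eq_C_mul, map_neg, map_one, map_ofNat]
        ring
      have h144 : x0 * x5 - x2 * x3 = (144:K)⁻¹ • ((144:K) • (x0 * x5 - x2 * x3)) := by
        rw [smul_smul, show ((144:K)⁻¹ * 144) = 1 by norm_num, one_smul]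
      rw [h144, key]
      exact Submodule.smul_mem _ _ (add_mem (add_mem (add_mem (add_mem
        (Submodule.smul_mem _ _ sGA) (Submodule.smul_mem _ _ sGB))
        (Submodule.smul_mem _ _ sG1)) (Submodule.smul_mem _ _ sG2))
        (Submodule.smul_mem _ _ sG5))
    · have key : (144:K) • (x2 * x5 - x3 * x4)
          = (-8:K) • (C (4:K) * ((x0 - C 3 * x2 + C 2 * x3)
                * (x0 - x2 + C 4 * x3 - C 3 * x4 + C 2 * x5)
              - (x0 - C 2 * x2 + C 3 * x3 - C 2 * x4) * (x0 - C 2 * x2 + C 3 * x3 - C 2 * x4)))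
            + (1:K) • (C (4:K) * ((C 4 * x0 - C 3 * x2 + x3)
                * (C 4 * x0 + C 5 * x2 + C 5 * x3 + C 4 * x5)
              - (C 4 * x0 + x2 + C 3 * x3 - C 2 * x4) * (C 4 * x0 + x2 + C 3 * x3 - C 2 * x4)))
            + (-8:K) • (C (4:K) * (x0 * x4 - x2 * x2))
            + (4:K) • (C (4:K) * (x2 * x4 - x3 * x3))
            + (28:K) • (C (4:K) * (x3 * x5 - x4 * x4)) := by
        simp only [smul_eq_C_mul, map_neg, map_one, map_ofNat]
        ring
      have h144 : x2 * x5 - x3 * x4 = (144:K)⁻¹ • ((144:K) • (x2 * x5 - x3 * x4)) := by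
        rw [smul_smul, show ((144:K)⁻¹ * 144) = 1 by norm_num, one_smul]
      rw [h144, key]
      exact Submodule.smul_mem _ _ (add_mem (add_mem (add_mem (add_mem
        (Submodule.smul_mem _ _ sGA) (Submodule.smul_mem _ _ sGB))
        (Submodule.smul_mem _ _ sG1)) (Submodule.smul_mem _ _ sG2))
        (Submodule.smul_mem _ _ sG5))
  have res := main (xVar K d (i+1) i (by omega) (by omega))
      (xVar K d (i+1) (i+2) (by omega) (by omega))
      (xVar K d (i+1) (i+3) (by omega) (by omega))
      (xVar K d (i+1) (i+4) (by omega) (by omega))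
      (xVar K d (i+1) (i+5) (by omega) (by omega))
      (by unfold xVar; exact isHomogeneous_X _ _)
      (by unfold xVar; exact isHomogeneous_X _ _)
      (by unfold xVar; exact isHomogeneous_X _ _)
      (by unfold xVar; exact isHomogeneous_X _ _)
      (by unfold xVar; exact isHomogeneous_X _ _)
      (hB i (i+4) (i+2) (i+2) (by omega) (by omega) (by omega) (by omega) (by omega) (by omega)
        (by omega) (by omega) (by omega))
      (hB (i+2) (i+4) (i+3) (i+3) (by omega) (by omega) (by omega) (by omega) (by omega)
        (by omega) (by omega) (by omega) (by omega))
      (hB i (i+5) (i+2) (i+3) (by omega) (by omega) (by omega) (by omega) (by omega) (by omega)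
        (by omega) (by omega) (by omega))
      (hB (i+2) (i+5) (i+3) (i+4) (by omega) (by omega) (by omega) (by omega) (by omega)
        (by omega) (by omega) (by omega) (by omega))
      (hB (i+3) (i+5) (i+4) (i+4) (by omega) (by omega) (by omega) (by omega) (by omega)
        (by omega) (by omega) (by omega) (by omega))
  exact res
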